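/- Let τ ∈ ℂ with Im τ > 0 and let x, y ∈ ℂ. Then C(x,y|τ)³ − C(−x,−y|τ)³ = C(x+π/3, y|τ)³ − C(−x−π/3, −y|τ)³. -/

import Mathlib

/-!
Expand `C(x,y|τ)³` as one absolutely convergent series over triples of lattice points.
Translating `x` by `π/3` multiplies the term of a triple by `ω ^ r`, where `ω = e^{2πi/3}` and `r`
is the residue mod 3 of `∑ (k + 2l + 1)`; so `C(x+π/3,y)³ = S₀ + ω S₁ + ω² S₂` with `S_r` the
partial sum over residue `r`. In the coordinates `w = k + lρ + (1+ρ)/3`, `ρ = e^{iπ/3}`, the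
exponent of `τ` in the term of a triple `W` is `‖W‖²` and the coefficients of `x`, `y` depend only
on `∑ wᵢ`. The unitary map `W ↦ ρW - ((1+ρ)/3)(∑ wᵢ)(1,1,1)` negates `∑ wᵢ` and maps the triples
of residue 1 bijectively onto those of residue 2, whence `S₁(x,y) = S₂(-x,-y)`. With `ω³ = 1`
the identity follows.
-/

open Complex

/-- The theta series C(x,y|τ). -/
noncomputable def Cfun (x y τ : ℂ) : ℂ :=
  Complex.exp (2 * Complex.I * (x + y)) * ∑' k : ℤ, ∑' l : ℤ,
    Complex.exp (2 * Complex.I * Real.pi * τ *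
      ((k : ℂ) ^ 2 + (k : ℂ) * (l : ℂ) + (l : ℂ) ^ 2 + (k : ℂ) + (l : ℂ) + 1 / 3)) *
    Complex.exp (2 * Complex.I * x * (2 * (l : ℂ) + (k : ℂ))) *
    Complex.exp (2 * Complex.I * y * (2 * (k : ℂ) + (l : ℂ)))

theorem tsum_pow_three_of_summable_norm {ι R : Type*} [NormedRing R] [CompleteSpace R]
    {f : ι → R} (hf : Summable fun i ↦ ‖f i‖) :
    (∑' i, f i) ^ 3 = ∑' p : ι × ι × ι, f p.1 * (f p.2.1 * f p.2.2) := by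
  rw [pow_three, tsum_mul_tsum_of_summable_norm hf hf,
    tsum_mul_tsum_of_summable_norm hf (hf.mul_norm hf)]

theorem Complex.exp_int_mul_eq_pow_val {m : ℕ} [NeZero m] {z : ℂ} (hz : cexp z ^ m = 1)
    (a : ℤ) : cexp (a * z) = cexp z ^ (a : ZMod m).val := by
  have hval : ((a : ZMod m).val : ℤ) = a % m := ZMod.val_intCast a
  conv_lhs => rw [← Int.emod_add_mul_ediv a m, ← hval]
  rw [Int.cast_add, add_mul, exp_add, Int.cast_natCast, exp_nat_mul, Int.cast_mul,
    Int.cast_natCast, mul_comm (m : ℂ), mul_assoc, exp_int_mul, exp_nat_mul, hz, one_zpow,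
    mul_one]

namespace CubicTheta

open scoped Real

def quad (p : ℤ × ℤ) : ℤ := p.1 ^ 2 + p.1 * p.2 + p.2 ^ 2 + p.1 + p.2

def linX (p : ℤ × ℤ) : ℤ := p.1 + 2 * p.2 + 1

def linY (p : ℤ × ℤ) : ℤ := 2 * p.1 + p.2 + 1

variable (x y τ : ℂ)

noncomputable def term (p : ℤ × ℤ) : ℂ :=
  cexp (2 * π * I * τ * (quad p + 1 / 3) + 2 * I * x * linX p + 2 * I * y * linY p)

variable {τ} in
theorem norm_term_le (hτ : 0 ≤ τ.im) (p : ℤ × ℤ) :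
    ‖term x y τ p‖ ≤ Real.exp (-(2 * π * τ.im / 3) - 2 * x.im - 2 * y.im) *
      (‖jacobiTheta₂_term p.1 (τ + (x + 2 * y) / π) τ‖ *
        ‖jacobiTheta₂_term p.2 (τ + (2 * x + y) / π) τ‖) := by
  rw [term, norm_jacobiTheta₂_term, norm_jacobiTheta₂_term, ← Real.exp_add, ← Real.exp_add,
    Complex.norm_exp, Real.exp_le_exp]
  have hre : (2 * π * I * τ * (quad p + 1 / 3) + 2 * I * x * linX p + 2 * I * y * linY p).re =
      -(2 * π * τ.im * (quad p + 1 / 3)) - 2 * x.im * linX p - 2 * y.im * linY p := by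
    simp [mul_re, mul_im, sub_eq_add_neg]
  have him (z : ℂ) : (τ + z / π).im = τ.im + z.im / π := by simp
  rw [hre, him, him]
  obtain ⟨k, l⟩ := p
  simp only [quad, linX, linY, add_im, mul_im, re_ofNat, im_ofNat, zero_mul, add_zero]
  push_cast
  field_simp
  nlinarith [mul_nonneg Real.pi_pos.le (mul_nonneg hτ (sq_nonneg ((k : ℝ) + l)))]

variable {τ} in
theorem summable_norm_term (hτ : 0 < τ.im) : Summable fun p ↦ ‖term x y τ p‖ := by
  have hθ (z : ℂ) : Summable fun n : ℤ ↦ ‖jacobiTheta₂_term n z τ‖ :=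
    ((summable_jacobiTheta₂_term_iff z τ).mpr hτ).norm
  refine .of_nonneg_of_le (fun _ ↦ norm_nonneg _) (norm_term_le x y hτ.le)
    (((hθ _).mul_of_nonneg (hθ _) (fun _ ↦ norm_nonneg _) fun _ ↦ norm_nonneg _).mul_left _)

variable {τ} in
theorem Cfun_eq_tsum_term (hτ : 0 < τ.im) : Cfun x y τ = ∑' p, term x y τ p := by
  have hs := (summable_norm_term x y hτ).of_norm
  rw [Cfun, hs.tsum_prod' hs.prod_factor, ← tsum_mul_left]
  refine tsum_congr fun k ↦ ?_
  rw [← tsum_mul_left]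
  refine tsum_congr fun l ↦ ?_
  rw [term, ← exp_add, ← exp_add, ← exp_add]
  simp only [quad, linX, linY]
  push_cast
  ring_nf

abbrev Triple := (ℤ × ℤ) × (ℤ × ℤ) × (ℤ × ℤ)

def total (f : ℤ × ℤ → ℤ) (p : Triple) : ℤ := f p.1 + f p.2.1 + f p.2.2

noncomputable def cubeTerm (p : Triple) : ℂ :=
  cexp (2 * π * I * τ * (total quad p + 1) + 2 * I * x * total linX p +
    2 * I * y * total linY p)

theorem term_mul_term_mul_term (p : Triple) :
    term x y τ p.1 * (term x y τ p.2.1 * term x y τ p.2.2) = cubeTerm x y τ p := by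
  rw [term, term, term, ← exp_add, ← exp_add, cubeTerm, total, total, total]
  push_cast
  ring_nf

variable {τ} in
theorem Cfun_pow_three (hτ : 0 < τ.im) : Cfun x y τ ^ 3 = ∑' p, cubeTerm x y τ p := by
  simp only [Cfun_eq_tsum_term x y hτ, tsum_pow_three_of_summable_norm (summable_norm_term x y hτ),
    term_mul_term_mul_term]

variable {τ} in
theorem summable_cubeTerm (hτ : 0 < τ.im) : Summable (cubeTerm x y τ) := by
  have h := summable_norm_term x y hτ
  simpa only [term_mul_term_mul_term] using (h.mul_norm (h.mul_norm h)).of_norm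

def residue (p : Triple) : ZMod 3 := total linX p

theorem residue_eq_one_iff (p : Triple) : residue p = 1 ↔ total linX p % 3 = 1 := by
  simpa [residue] using ZMod.intCast_eq_intCast_iff' (total linX p) 1 3

theorem residue_eq_two_iff (p : Triple) : residue p = 2 ↔ total linX p % 3 = 2 := by
  simpa [residue] using ZMod.intCast_eq_intCast_iff' (total linX p) 2 3

theorem cubeTerm_add_left (s : ℂ) (p : Triple) :
    cubeTerm (x + s) y τ p = cexp (total linX p * (2 * I * s)) * cubeTerm x y τ p := by
  rw [cubeTerm, cubeTerm, ← exp_add]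
  ring_nf

noncomputable def residueSum (r : ZMod 3) : ℂ := ∑' p : residue ⁻¹' {r}, cubeTerm x y τ p

variable {τ} in
theorem Cfun_add_pow_three (hτ : 0 < τ.im) {s : ℂ} (hs : cexp (2 * I * s) ^ 3 = 1) :
    Cfun (x + s) y τ ^ 3 = residueSum x y τ 0 + cexp (2 * I * s) * residueSum x y τ 1 +
      cexp (2 * I * s) ^ 2 * residueSum x y τ 2 := by
  have hfiber (r : ZMod 3) : ∑' p : residue ⁻¹' {r}, cubeTerm (x + s) y τ p =
      cexp (2 * I * s) ^ r.val * residueSum x y τ r := by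
    rw [residueSum, ← tsum_mul_left]
    refine tsum_congr fun ⟨p, hp⟩ ↦ ?_
    rw [cubeTerm_add_left, exp_int_mul_eq_pow_val hs, show (total linX p : ZMod 3) = r from hp]
  rw [Cfun_pow_three _ _ hτ, ← ((summable_cubeTerm _ y hτ).hasSum.tsum_fiberwise residue).tsum_eq,
    tsum_fintype, show ∀ f : ZMod 3 → ℂ, ∑ r, f r = f 0 + f 1 + f 2 from Fin.sum_univ_three,
    hfiber, hfiber, hfiber, show (1 : ZMod 3).val = 1 from rfl,
    show (2 : ZMod 3).val = 2 from rfl, ZMod.val_zero, pow_zero, one_mul, pow_one]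

def Triple.map (g : ℤ × ℤ → ℤ × ℤ) (p : Triple) : Triple := (g p.1, g p.2.1, g p.2.2)

/- `(k, l) ↦ (-l, k + l)` is multiplication by `ρ`; the translation `-((1+ρ)/3)(∑ wᵢ)` is integral
exactly on triples of residue 1. -/
def toResidueTwo (p : Triple) : Triple :=
  let b := (total linX p - 1) / 3
  p.map fun q ↦ (total Prod.snd p - b - q.2, q.1 + q.2 - b)

def toResidueOne (p : Triple) : Triple :=
  let m := (total linX p + 1) / 3
  p.map fun q ↦ (q.1 + q.2 + total Prod.snd p + 2 - 2 * m, m - total Prod.snd p - 2 - q.1)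

theorem total_linX_toResidueTwo {p : Triple} (hp : residue p = 1) :
    total linX (toResidueTwo p) = -total linX p := by
  rw [residue_eq_one_iff] at hp
  obtain ⟨⟨k₀, l₀⟩, ⟨k₁, l₁⟩, ⟨k₂, l₂⟩⟩ := p
  simp only [toResidueTwo, Triple.map, total, linX] at hp ⊢
  omega

theorem total_linY_toResidueTwo {p : Triple} (hp : residue p = 1) :
    total linY (toResidueTwo p) = -total linY p := by
  rw [residue_eq_one_iff] at hp
  obtain ⟨⟨k₀, l₀⟩, ⟨k₁, l₁⟩, ⟨k₂, l₂⟩⟩ := p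
  simp only [toResidueTwo, Triple.map, total, linX, linY] at hp ⊢
  omega

theorem total_quad_toResidueTwo {p : Triple} (hp : residue p = 1) :
    total quad (toResidueTwo p) = total quad p := by
  have hb : 3 * ((total linX p - 1) / 3) = total linX p - 1 := by
    rw [residue_eq_one_iff] at hp
    omega
  simp only [toResidueTwo]
  generalize (total linX p - 1) / 3 = b at hb ⊢
  obtain ⟨⟨k₀, l₀⟩, ⟨k₁, l₁⟩, ⟨k₂, l₂⟩⟩ := p
  simp only [Triple.map, total, linX, quad] at hb ⊢
  linear_combination (3 * b - (l₀ + l₁ + l₂)) * hb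

theorem cubeTerm_toResidueTwo {p : Triple} (hp : residue p = 1) :
    cubeTerm (-x) (-y) τ (toResidueTwo p) = cubeTerm x y τ p := by
  rw [cubeTerm, cubeTerm, total_quad_toResidueTwo hp, total_linX_toResidueTwo hp,
    total_linY_toResidueTwo hp]
  push_cast
  ring_nf

def residueOneEquivResidueTwo : residue ⁻¹' {1} ≃ residue ⁻¹' {2} where
  toFun p := ⟨toResidueTwo p, by
    have := (residue_eq_one_iff p).mp p.2
    rw [Set.mem_preimage, Set.mem_singleton_iff, residue_eq_two_iff,
      total_linX_toResidueTwo p.2]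
    omega⟩
  invFun q := ⟨toResidueOne q, by
    have := (residue_eq_two_iff q).mp q.2
    obtain ⟨⟨⟨k₀, l₀⟩, ⟨k₁, l₁⟩, ⟨k₂, l₂⟩⟩, _⟩ := q
    simp only [Set.mem_preimage, Set.mem_singleton_iff, residue_eq_one_iff, toResidueOne,
      Triple.map, total, linX] at this ⊢
    omega⟩
  left_inv := fun ⟨p, hp⟩ ↦ by
    rw [Set.mem_preimage, Set.mem_singleton_iff, residue_eq_one_iff] at hp
    obtain ⟨⟨k₀, l₀⟩, ⟨k₁, l₁⟩, ⟨k₂, l₂⟩⟩ := p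
    simp only [toResidueOne, toResidueTwo, Triple.map, total, linX, Subtype.mk.injEq,
      Prod.mk.injEq] at hp ⊢
    omega
  right_inv := fun ⟨q, hq⟩ ↦ by
    rw [Set.mem_preimage, Set.mem_singleton_iff, residue_eq_two_iff] at hq
    obtain ⟨⟨k₀, l₀⟩, ⟨k₁, l₁⟩, ⟨k₂, l₂⟩⟩ := q
    simp only [toResidueOne, toResidueTwo, Triple.map, total, linX, Subtype.mk.injEq,
      Prod.mk.injEq] at hq ⊢
    omega

theorem residueSum_one : residueSum x y τ 1 = residueSum (-x) (-y) τ 2 := by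
  rw [residueSum, residueSum, ← residueOneEquivResidueTwo.tsum_eq]
  exact tsum_congr fun p ↦ (cubeTerm_toResidueTwo x y τ p.2).symm

end CubicTheta

/-- `C(x,y|τ)³ − C(−x,−y|τ)³` is invariant under `x ↦ x + π/3`. -/
theorem C_cube_difference_invariance (τ : ℂ) (hτ : 0 < τ.im) (x y : ℂ) :
    Cfun x y τ ^ 3 - Cfun (-x) (-y) τ ^ 3
      = Cfun (x + (Real.pi : ℂ) / 3) y τ ^ 3 - Cfun (-x - (Real.pi : ℂ) / 3) (-y) τ ^ 3 := by
  set ω := cexp (2 * I * (Real.pi / 3))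
  have hω : ω ^ 3 = 1 := by
    rw [← exp_nat_mul, ← exp_two_pi_mul_I]
    push_cast
    ring_nf
  have hω_neg : cexp (2 * I * -(Real.pi / 3)) = ω ^ 2 := by
    rw [← exp_nat_mul, ← mul_one (cexp (2 * I * _)), ← exp_two_pi_mul_I, ← exp_add]
    push_cast
    ring_nf
  have h₀ (x y : ℂ) := CubicTheta.Cfun_add_pow_three x y hτ (s := 0) (by simp)
  simp only [add_zero, mul_zero, exp_zero, one_pow, one_mul] at h₀
  have h₁ := CubicTheta.Cfun_add_pow_three x y hτ hω
  have h₂ := CubicTheta.Cfun_add_pow_three (-x) (-y) hτ (s := -(Real.pi / 3))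
    (by rw [hω_neg, ← pow_mul, pow_mul', hω, one_pow])
  have h₁₂ := CubicTheta.residueSum_one x y τ
  have h₂₁ := CubicTheta.residueSum_one (-x) (-y) τ
  rw [neg_neg, neg_neg] at h₂₁
  rw [sub_eq_add_neg (-x), h₀, h₀, h₁, h₂, hω_neg]
  linear_combination
    (1 - ω) * h₁₂ - (1 - ω ^ 2) * h₂₁ + ω * CubicTheta.residueSum (-x) (-y) τ 2 * hω
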